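/- For any L-structure A, the theories T_u*(A) and T_i*(A) are companions (have the same pc models); in particular every model of T_u*(A) continues into a model of T_i*(A), and both theories have the joint continuation property. -/

import Mathlib

open FirstOrder FirstOrder.Language

universe u v w w'

namespace PositiveLogic

/-- Positive formulas with `n` free variables: built from `⊥`, atomic formulas,
`∧`, `∨` and `∃`. -/
inductive PosForm (L : FirstOrder.Language.{u, v}) : ℕ → Type (max u v)
  | falsum {n : ℕ} : PosForm L n
  | equal {n : ℕ} (t u : L.Term (Fin n)) : PosForm L n
  | rel {n l : ℕ} (R : L.Relations l) (ts : Fin l → L.Term (Fin n)) : PosForm L n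
  | and {n : ℕ} (φ ψ : PosForm L n) : PosForm L n
  | or {n : ℕ} (φ ψ : PosForm L n) : PosForm L n
  | ex {n : ℕ} (φ : PosForm L (n + 1)) : PosForm L n

variable {L : FirstOrder.Language.{u, v}}

/-- Realization of a positive formula in a structure. -/
def PosForm.Realize {M : Type w} [L.Structure M] :
    ∀ {n : ℕ}, PosForm L n → (Fin n → M) → Prop
  | _, .falsum, _ => False
  | _, .equal t u, v => t.realize v = u.realize v
  | _, .rel R ts, v => Structure.RelMap R fun i => (ts i).realize v
  | _, .and φ ψ, v => φ.Realize v ∧ ψ.Realize v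
  | _, .or φ ψ, v => φ.Realize v ∨ ψ.Realize v
  | _, .ex φ, v => ∃ x : M, φ.Realize (Fin.snoc v x)

/-- A positive sentence `φ` (element of `PosForm L 0`) holds in `M`. -/
def PosRealize (M : Type w) [L.Structure M] (φ : PosForm L 0) : Prop :=
  φ.Realize (Fin.elim0 : Fin 0 → M)

/-- `Diag⁺*(M)`: the set of positive `L`-sentences true in `M`. -/
def posTheory (M : Type w) [L.Structure M] : Set (PosForm L 0) :=
  {φ | PosRealize M φ}

/-- `T_u*(M)`, identified with the set of positive `L`-sentences whose negation
(an h-universal sentence) is true in `M`. -/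
def TuStar (M : Type w) [L.Structure M] : Set (PosForm L 0) :=
  {φ | ¬ PosRealize M φ}

/-- A basic h-inductive sentence `∀ x̄ (φ(x̄) → ψ(x̄))` with `φ, ψ` positive.
(A general h-inductive sentence, a finite conjunction of such, is equivalent to
the set of its conjuncts.) -/
structure HInd (L : FirstOrder.Language.{u, v}) : Type (max u v) where
  n : ℕ
  hyp : PosForm L n
  concl : PosForm L n

/-- Realization of a basic h-inductive sentence. -/
def HInd.Realize (s : HInd L) (M : Type w) [L.Structure M] : Prop :=
  ∀ v : Fin s.n → M, s.hyp.Realize v → s.concl.Realize v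

/-- `M` is a model of the h-inductive theory `T`. -/
def HModels (M : Type w) [L.Structure M] (T : Set (HInd L)) : Prop :=
  ∀ s ∈ T, s.Realize M

/-- `T_i*(M)`: the set of (basic) h-inductive `L`-sentences true in `M`. -/
def TiStar (M : Type w) [L.Structure M] : Set (HInd L) :=
  {s | s.Realize M}

/-- `T_u(T)`: the h-universal consequences of `T`, identified with the set of
positive sentences `φ` such that `¬φ` holds in every model of `T`. -/
def TuOf (T : Set (HInd L)) : Set (PosForm L 0) :=
  {φ | ∀ (M : Type (max u v)) [L.Structure M], HModels M T → ¬ PosRealize M φ}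

/-- A homomorphism is an immersion if it preserves and reflects all positive
formulas. -/
def IsImmersion {A : Type w} {B : Type w'} [L.Structure A] [L.Structure B]
    (f : A →[L] B) : Prop :=
  ∀ {n : ℕ} (φ : PosForm L n) (v : Fin n → A), φ.Realize v ↔ φ.Realize (f ∘ v)

/-- A homomorphism `f : A → B` is a strong immersion if `B`, with parameters
from `A` interpreted via `f`, models `T_i(A)`, the full h-inductive
`L(A)`-theory of `A`. -/
def IsStrongImmersion {A : Type w} {B : Type w'} [L.Structure A] [L.Structure B]
    (f : A →[L] B) : Prop :=
  ∀ {n m : ℕ} (φ ψ : PosForm L (n + m)) (a : Fin m → A),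
    (∀ v : Fin n → A, φ.Realize (Fin.append v a) → ψ.Realize (Fin.append v a)) →
    ∀ v : Fin n → B, φ.Realize (Fin.append v (f ∘ a)) → ψ.Realize (Fin.append v (f ∘ a))

/-- `M` is a positively closed (pc) model of `T`: it models `T` and every
homomorphism from `M` into a model of `T` is an immersion. -/
def IsPC (T : Set (HInd L)) (M : Type (max u v)) [L.Structure M] : Prop :=
  HModels M T ∧
    ∀ (N : Type (max u v)) [L.Structure N], HModels N T → ∀ f : M →[L] N, IsImmersion f

/-- `T` has the joint continuation property (is positively complete). -/
def JCP (T : Set (HInd L)) : Prop :=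
  ∀ (A : Type (max u v)) [L.Structure A] (B : Type (max u v)) [L.Structure B],
    HModels A T → HModels B T →
      ∃ (C : Type (max u v)) (_ : L.Structure C),
        HModels C T ∧ Nonempty (A →[L] C) ∧ Nonempty (B →[L] C)

/-- `T₁` and `T₂` are `T`-complete. -/
def TComplete (T₁ T₂ T : Set (HInd L)) : Prop :=
  ∀ (A : Type (max u v)) [L.Structure A] (B : Type (max u v)) [L.Structure B],
    HModels A T₁ → HModels B T₂ →
      ∃ (C : Type (max u v)) (_ : L.Structure C),
        HModels C T ∧ Nonempty (A →[L] C) ∧ Nonempty (B →[L] C)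

/-- `T_u*(A)` viewed as an h-inductive theory: `¬φ` is `∀ (φ → ⊥)`. -/
def TuStarInd (A : Type w) [L.Structure A] : Set (HInd L) :=
  (fun φ => ⟨0, φ, PosForm.falsum⟩) '' TuStar (L := L) A


/-! Every positive sentence true in a model `B` of `T_u*(A)` is true in `A`; applied to the
existential closure of a finite conjunction of positive facts about `B`, this interprets any
finite part of `Diag⁺(B)` in `A`. Hence, by compactness, `Diag⁺(B) ∪ Diag⁺(C) ∪ T_i*(A)` has a
model whenever `B` and `C` model `T_u*(A)`: they continue jointly into a model of `T_i*(A)`.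
As `T_u*(A) ⊆ T_i*(A)`, both theories get the joint continuation property, and a pc model of
either one continues into a model of the other by an immersion, so their pc models agree. -/

namespace PosForm

variable {M : Type w} {N : Type w'} [L.Structure M] [L.Structure N]

theorem realize_hom (f : M →[L] N) :
    ∀ {n} (φ : PosForm L n) (v : Fin n → M), φ.Realize v → φ.Realize (f ∘ v)
  | _, .falsum, _, h => h
  | _, .equal t u, v, h => by simpa [Realize, HomClass.realize_term] using congrArg f h
  | _, .rel R ts, v, h => by
    simp only [Realize, HomClass.realize_term]
    exact f.map_rel R _ h
  | _, .and φ ψ, v, h => ⟨realize_hom f φ v h.1, realize_hom f ψ v h.2⟩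
  | _, .or φ ψ, v, h => h.imp (realize_hom f φ v) (realize_hom f ψ v)
  | _, .ex φ, v, h =>
    let ⟨x, hx⟩ := h
    ⟨f x, by simpa only [Fin.comp_snoc] using realize_hom f φ _ hx⟩

def relabel : ∀ {n m : ℕ}, (Fin n → Fin m) → PosForm L n → PosForm L m
  | _, _, _, .falsum => .falsum
  | _, _, σ, .equal t u => .equal (t.relabel σ) (u.relabel σ)
  | _, _, σ, .rel R ts => .rel R fun i => (ts i).relabel σ
  | _, _, σ, .and φ ψ => .and (relabel σ φ) (relabel σ ψ)
  | _, _, σ, .or φ ψ => .or (relabel σ φ) (relabel σ ψ)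
  | _, _, σ, .ex φ => .ex (relabel (Fin.snoc (Fin.castSucc ∘ σ) (Fin.last _)) φ)

theorem realize_relabel :
    ∀ {n m : ℕ} (σ : Fin n → Fin m) (φ : PosForm L n) (v : Fin m → M),
      (φ.relabel σ).Realize v ↔ φ.Realize (v ∘ σ)
  | _, _, _, .falsum, _ => Iff.rfl
  | _, _, _, .equal _ _, _ => by simp [relabel, Realize, Term.realize_relabel]
  | _, _, _, .rel _ _, _ => by simp [relabel, Realize, Term.realize_relabel]
  | _, _, σ, .and φ ψ, v => and_congr (realize_relabel σ φ v) (realize_relabel σ ψ v)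
  | _, _, σ, .or φ ψ, v => or_congr (realize_relabel σ φ v) (realize_relabel σ ψ v)
  | _, _, σ, .ex φ, v => exists_congr fun x => by
    rw [realize_relabel, Fin.comp_snoc, Fin.snoc_last, ← Function.comp_assoc,
      Fin.snoc_comp_castSucc]

def exs : ∀ {n : ℕ}, PosForm L n → PosForm L 0
  | 0, φ => φ
  | _ + 1, φ => exs φ.ex

theorem realize_exs :
    ∀ {n : ℕ} (φ : PosForm L n), PosRealize M φ.exs ↔ ∃ v : Fin n → M, φ.Realize v
  | 0, φ => ⟨fun h => ⟨_, h⟩, fun ⟨v, h⟩ => by rwa [PosRealize, Subsingleton.elim Fin.elim0 v]⟩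
  | n + 1, φ => (realize_exs φ.ex).trans
    ⟨fun ⟨_, x, hx⟩ => ⟨_, hx⟩,
      fun ⟨w, hw⟩ => ⟨Fin.init w, w (Fin.last n), by rwa [Fin.snoc_init_self]⟩⟩

def appendAnd {n m : ℕ} (φ : PosForm L n) (ψ : PosForm L m) : PosForm L (n + m) :=
  .and (φ.relabel (Fin.castAdd m)) (ψ.relabel (Fin.natAdd n))

theorem realize_appendAnd {n m : ℕ} (φ : PosForm L n) (ψ : PosForm L m) (v : Fin (n + m) → M) :
    (φ.appendAnd ψ).Realize v ↔ φ.Realize (v ∘ Fin.castAdd m) ∧ ψ.Realize (v ∘ Fin.natAdd n) :=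
  and_congr (realize_relabel _ _ _) (realize_relabel _ _ _)

def toBoundedFormula {α : Type*} : ∀ {n : ℕ}, PosForm L n → L.BoundedFormula α n
  | _, .falsum => ⊥
  | _, .equal t u => (t.relabel Sum.inr).bdEqual (u.relabel Sum.inr)
  | _, .rel R ts => R.boundedFormula fun i => (ts i).relabel Sum.inr
  | _, .and φ ψ => φ.toBoundedFormula ⊓ ψ.toBoundedFormula
  | _, .or φ ψ => φ.toBoundedFormula ⊔ ψ.toBoundedFormula
  | _, .ex φ => φ.toBoundedFormula.ex

theorem realize_toBoundedFormula {α : Type*} :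
    ∀ {n : ℕ} (φ : PosForm L n) (v : α → M) (xs : Fin n → M),
      φ.toBoundedFormula.Realize v xs ↔ φ.Realize xs
  | _, .falsum, _, _ => Iff.rfl
  | _, .equal _ _, _, _ => by simp [toBoundedFormula, Realize, Term.realize_relabel]
  | _, .rel _ _, _, _ => by simp [toBoundedFormula, Realize, Term.realize_relabel]
  | _, .and φ ψ, _, _ => by
    simp [toBoundedFormula, Realize, realize_toBoundedFormula φ, realize_toBoundedFormula ψ]
  | _, .or φ ψ, _, _ => by
    simp [toBoundedFormula, Realize, realize_toBoundedFormula φ, realize_toBoundedFormula ψ]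
  | _, .ex φ, _, _ => by simp [toBoundedFormula, Realize, realize_toBoundedFormula φ]

end PosForm

def HInd.toFormula {α : Type*} (s : HInd L) : L.Formula α :=
  (s.hyp.toBoundedFormula.imp s.concl.toBoundedFormula).alls

theorem HInd.realize_toFormula {α : Type*} {M : Type w} [L.Structure M] (s : HInd L)
    (v : α → M) : (s.toFormula : L.Formula α).Realize v ↔ s.Realize M := by
  simp only [toFormula, BoundedFormula.realize_alls, BoundedFormula.realize_imp,
    PosForm.realize_toBoundedFormula, HInd.Realize]

section Models

variable {M : Type w} {N : Type w'} [L.Structure M] [L.Structure N]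

theorem HModels.mono {T T' : Set (HInd L)} (h : HModels M T') (hsub : T ⊆ T') : HModels M T :=
  fun s hs => h s (hsub hs)

theorem HModels.of_isImmersion {T : Set (HInd L)} {f : M →[L] N} (hf : IsImmersion f)
    (h : HModels N T) : HModels M T :=
  fun s hs v hv => (hf s.concl v).2 (h s hs _ ((hf s.hyp v).1 hv))

theorem IsImmersion.of_comp {P : Type*} [L.Structure P] {f : M →[L] N} {g : N →[L] P}
    (h : IsImmersion (g.comp f)) : IsImmersion f := fun φ v =>
  ⟨φ.realize_hom f v, fun hv => (h φ v).2 (φ.realize_hom g _ hv)⟩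

end Models

section Companions

variable {T T' : Set (HInd L)}

theorem isPC_iff_isPC_of_continues (hsub : T ⊆ T')
    (hcont : ∀ (B : Type (max u v)) [L.Structure B], HModels B T →
      ∃ (D : Type (max u v)) (_ : L.Structure D), HModels D T' ∧ Nonempty (B →[L] D))
    (M : Type (max u v)) [L.Structure M] : IsPC T M ↔ IsPC T' M := by
  constructor
  · rintro ⟨hM, hpc⟩
    obtain ⟨D, _, hD, ⟨f⟩⟩ := hcont M hM
    exact ⟨hD.of_isImmersion (hpc D (hD.mono hsub) f), fun N _ hN => hpc N (hN.mono hsub)⟩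
  · rintro ⟨hM, hpc⟩
    refine ⟨hM.mono hsub, fun N _ hN f => ?_⟩
    obtain ⟨D, _, hD, ⟨g⟩⟩ := hcont N hN
    exact IsImmersion.of_comp (hpc D hD (g.comp f))

theorem TComplete.jcp_of_subset (h : TComplete T T T') (hsub : T ⊆ T') : JCP T :=
  fun B _ C _ hB hC =>
    let ⟨D, _, hD, hBD, hCD⟩ := h B C hB hC
    ⟨D, _, hD.mono hsub, hBD, hCD⟩

theorem TComplete.jcp_of_subset' (h : TComplete T T T') (hsub : T ⊆ T') : JCP T' :=
  fun B _ C _ hB hC => h B C (hB.mono hsub) (hC.mono hsub)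

end Companions

/-- The positive diagram `Diag⁺(B)`. -/
structure PosDiag (L : FirstOrder.Language.{u, v}) (B : Type w) [L.Structure B] :
    Type (max u v w) where
  n : ℕ
  form : PosForm L n
  params : Fin n → B
  holds : form.Realize params

namespace PosDiag

variable {B : Type w} {M : Type w'} [L.Structure B] [L.Structure M]

def Realize (x : PosDiag L B) (g : B → M) : Prop :=
  x.form.Realize (g ∘ x.params)

def and (x y : PosDiag L B) : PosDiag L B where
  n := x.n + y.n
  form := x.form.appendAnd y.form
  params := Fin.append x.params y.params
  holds := (PosForm.realize_appendAnd _ _ _).2 <| by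
    simpa [Function.comp_def] using ⟨x.holds, y.holds⟩

theorem realize_and (x y : PosDiag L B) (g : B → M) :
    (x.and y).Realize g ↔ x.Realize g ∧ y.Realize g := by
  simp [Realize, and, PosForm.realize_appendAnd, Function.comp_def]

theorem exists_realize_imp_of_finset {s : Finset (PosDiag L B)} (hs : s.Nonempty) :
    ∃ y : PosDiag L B, ∀ g : B → M, y.Realize g → ∀ x ∈ s, x.Realize g := by
  induction hs using Finset.Nonempty.cons_induction with
  | singleton x => exact ⟨x, fun g hg x' hx' => Finset.mem_singleton.1 hx' ▸ hg⟩
  | cons x s _ _ ih =>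
    obtain ⟨y, hy⟩ := ih
    refine ⟨x.and y, fun g hg x' hx' => ?_⟩
    rw [realize_and] at hg
    rcases Finset.mem_cons.1 hx' with rfl | hx'
    exacts [hg.1, hy g hg.2 x' hx']

def toHom (g : B → M) (h : ∀ x : PosDiag L B, x.Realize g) : B →[L] M where
  toFun := g
  map_fun' {n} f xs := by
    simpa [Realize, PosForm.Realize, Function.comp_def] using
      h ⟨n + 1, .equal (.var 0) (.func f fun i => .var i.succ),
        Fin.cons (Structure.funMap f xs) xs, by simp [PosForm.Realize]⟩
  map_rel' {n} r xs hr := h ⟨n, .rel r .var, xs, hr⟩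

def toFormula {α : Type*} (x : PosDiag L B) (ι : B → α) : L.Formula α :=
  x.form.toBoundedFormula.toFormula.relabel (Sum.elim id (ι ∘ x.params))

theorem realize_toFormula {α : Type*} (x : PosDiag L B) (ι : B → α) (v : α → M) :
    (x.toFormula ι).Realize v ↔ x.Realize (v ∘ ι) := by
  rw [toFormula, Formula.realize_relabel, BoundedFormula.realize_toFormula,
    PosForm.realize_toBoundedFormula]
  rfl

end PosDiag

theorem exists_injective_comp_eq {α : Type*} {n : ℕ} (b : Fin n → α) :
    ∃ (k : ℕ) (c : Fin k → α) (σ : Fin n → Fin k), Function.Injective c ∧ c ∘ σ = b := by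
  classical
  let e := Fintype.equivFin (Set.range b)
  exact ⟨_, Subtype.val ∘ e.symm, e ∘ Set.rangeFactorization b,
    Subtype.val_injective.comp e.symm.injective, by funext i; simp [Set.rangeFactorization]⟩

section Transfer

variable {A : Type w} {B : Type w'} [L.Structure A] [L.Structure B]
  (hB : HModels B (TuStarInd (L := L) A))
include hB

theorem realize_of_models_tuStarInd {φ : PosForm L 0} (h : PosRealize B φ) :
    PosRealize A φ := by
  by_contra hA
  exact hB _ ⟨φ, hA, rfl⟩ Fin.elim0 h

theorem exists_realize_of_models_tuStarInd {n : ℕ} {φ : PosForm L n} {b : Fin n → B}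
    (h : φ.Realize b) : ∃ a : Fin n → A, φ.Realize a :=
  (PosForm.realize_exs φ).1 (realize_of_models_tuStarInd hB ((PosForm.realize_exs φ).2 ⟨b, h⟩))

theorem nonempty_fun_of_models_tuStarInd : Nonempty (B → A) := by
  rcases isEmpty_or_nonempty B with _ | ⟨⟨b⟩⟩
  · exact ⟨isEmptyElim⟩
  · obtain ⟨a, -⟩ := exists_realize_of_models_tuStarInd hB
      (φ := .equal (.var 0) (.var 0)) (b := fun _ : Fin 1 => b) (by simp [PosForm.Realize])
    exact ⟨fun _ => a 0⟩

-- The parameters of `x` may repeat, so the witness found in `A` is pulled back along an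
-- injective enumeration of them.
theorem PosDiag.exists_realize (x : PosDiag L B) : ∃ g : B → A, x.Realize g := by
  obtain ⟨k, c, σ, hc, hcσ⟩ := exists_injective_comp_eq x.params
  obtain ⟨a, ha⟩ := exists_realize_of_models_tuStarInd hB (φ := x.form.relabel σ) (b := c)
    ((PosForm.realize_relabel _ _ _).2 (hcσ ▸ x.holds))
  obtain ⟨g₀⟩ := nonempty_fun_of_models_tuStarInd hB
  refine ⟨Function.extend c a g₀, ?_⟩
  rw [PosDiag.Realize, ← hcσ, ← Function.comp_assoc, Function.extend_comp hc]
  exact (PosForm.realize_relabel _ _ _).1 ha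

theorem PosDiag.exists_forall_realize (s : Finset (PosDiag L B)) :
    ∃ g : B → A, ∀ x ∈ s, x.Realize g := by
  rcases s.eq_empty_or_nonempty with rfl | hs
  · obtain ⟨g⟩ := nonempty_fun_of_models_tuStarInd hB
    exact ⟨g, by simp⟩
  · obtain ⟨y, hy⟩ := PosDiag.exists_realize_imp_of_finset (M := A) hs
    obtain ⟨g, hg⟩ := y.exists_realize hB
    exact ⟨g, hy g hg⟩

-- `B → A` is a subsingleton, so the maps realizing the single facts all coincide.
theorem nonempty_hom_of_isEmpty [IsEmpty A] : Nonempty (B →[L] A) := by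
  obtain ⟨g⟩ := nonempty_fun_of_models_tuStarInd hB
  refine ⟨PosDiag.toHom g fun x => ?_⟩
  obtain ⟨g', hg'⟩ := x.exists_realize hB
  rwa [Subsingleton.elim g' g] at hg'

end Transfer

theorem exists_realize_of_forall_finset {α : Type w} {ι : Type*} (φ : ι → L.Formula α)
    (h : ∀ s : Finset ι, ∃ (M : Type w') (_ : L.Structure M) (_ : Nonempty M) (v : α → M),
      ∀ i ∈ s, (φ i).Realize v) :
    ∃ (M : Type (max u v w)) (_ : L.Structure M) (v : α → M), ∀ i, (φ i).Realize v := by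
  obtain ⟨N⟩ : Theory.IsSatisfiable (⋃ i, {Formula.equivSentence (φ i)} : L[[α]].Theory) := by
    rw [Theory.isSatisfiable_iUnion_iff_isSatisfiable_iUnion_finset]
    intro s
    obtain ⟨M, _, _, v, hv⟩ := h s
    let _ := constantsOn.structure v
    have : M ⊨ ⋃ i ∈ s, {Formula.equivSentence (φ i)} := by
      simp only [Theory.model_iff, Set.mem_iUnion, Set.mem_singleton_iff]
      rintro _ ⟨i, hi, rfl⟩
      exact (Formula.realize_equivSentence M (φ i)).2 (hv i hi)
    exact Theory.Model.isSatisfiable M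
  let _ : L.Structure N := (L.lhomWithConstants α).reduct N
  have := LHom.isExpansionOn_reduct (L.lhomWithConstants α) N
  refine ⟨N, inferInstance, fun a => (L.con a : N), fun i => ?_⟩
  rw [← Formula.realize_equivSentence]
  exact N.is_model.realize_of_mem _ (Set.mem_iUnion.2 ⟨i, rfl⟩)

theorem models_tiStar_self (A : Type w) [L.Structure A] : HModels A (TiStar (L := L) A) :=
  fun _ h => h

theorem tuStarInd_subset_tiStar (A : Type w) [L.Structure A] :
    TuStarInd (L := L) A ⊆ TiStar A := by
  rintro _ ⟨φ, hφ, rfl⟩ v hv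
  exact hφ (by rwa [PosRealize, Subsingleton.elim Fin.elim0 v])

-- `Diag⁺(B) ∪ Diag⁺(C) ∪ T_i*(A)` is finitely satisfiable in `A` itself.
theorem tComplete_tuStarInd_tiStar_of_nonempty (A : Type (max u v)) [L.Structure A]
    [Nonempty A] : TComplete (TuStarInd (L := L) A) (TuStarInd A) (TiStar A) := by
  intro B _ C _ hB hC
  let φ : PosDiag L B ⊕ PosDiag L C ⊕ TiStar (L := L) A → L.Formula (B ⊕ C) :=
    Sum.elim (·.toFormula Sum.inl) (Sum.elim (·.toFormula Sum.inr) (·.1.toFormula))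
  obtain ⟨D, _, v, hv⟩ := exists_realize_of_forall_finset φ fun s => by
    obtain ⟨gB, hgB⟩ := PosDiag.exists_forall_realize hB s.toLeft
    obtain ⟨gC, hgC⟩ := PosDiag.exists_forall_realize hC s.toRight.toLeft
    refine ⟨A, inferInstance, inferInstance, Sum.elim gB gC, ?_⟩
    rintro (x | y | ⟨t, ht⟩) hi
    · exact (x.realize_toFormula _ _).2 (hgB x (Finset.mem_toLeft.2 hi))
    · exact (y.realize_toFormula _ _).2 (hgC y (by simpa using hi))
    · exact (t.realize_toFormula _).2 ht
  exact ⟨D, _, fun t ht => (t.realize_toFormula v).1 (hv (.inr (.inr ⟨t, ht⟩))),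
    ⟨PosDiag.toHom (v ∘ Sum.inl) fun x => (x.realize_toFormula _ _).1 (hv (.inl x))⟩,
    ⟨PosDiag.toHom (v ∘ Sum.inr) fun y => (y.realize_toFormula _ _).1 (hv (.inr (.inl y)))⟩⟩

-- Compactness only yields nonempty models, whereas `T_i*(∅)` says that the universe is empty.
theorem tComplete_tuStarInd_tiStar (A : Type (max u v)) [L.Structure A] :
    TComplete (TuStarInd (L := L) A) (TuStarInd A) (TiStar A) := by
  rcases isEmpty_or_nonempty A with _ | _
  · exact fun B _ C _ hB hC =>
      ⟨A, _, models_tiStar_self A, nonempty_hom_of_isEmpty hB, nonempty_hom_of_isEmpty hC⟩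
  · exact tComplete_tuStarInd_tiStar_of_nonempty A

/-- `T_u*(A)` and `T_i*(A)` are companions: they have the same pc
models, every model of `T_u*(A)` continues into a model of `T_i*(A)`, and both
have the joint continuation property. -/
theorem TuStar_TiStar_companions (A : Type (max u v)) [L.Structure A] :
    (∀ (M : Type (max u v)) [L.Structure M], IsPC (TuStarInd (L := L) A) M ↔ IsPC (TiStar (L := L) A) M) ∧
    (∀ (B : Type (max u v)) [L.Structure B], HModels B (TuStarInd (L := L) A) →
        ∃ (D : Type (max u v)) (_ : L.Structure D),
          HModels D (TiStar (L := L) A) ∧ Nonempty (B →[L] D)) ∧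
    JCP (TuStarInd (L := L) A) ∧ JCP (TiStar (L := L) A) := by
  have hsub := tuStarInd_subset_tiStar (L := L) A
  have hjoint := tComplete_tuStarInd_tiStar (L := L) A
  have hcont : ∀ (B : Type (max u v)) [L.Structure B], HModels B (TuStarInd (L := L) A) →
      ∃ (D : Type (max u v)) (_ : L.Structure D),
        HModels D (TiStar (L := L) A) ∧ Nonempty (B →[L] D) := fun B _ hB =>
    let ⟨D, _, hD, hBD, _⟩ := hjoint B A hB ((models_tiStar_self (L := L) A).mono hsub)
    ⟨D, _, hD, hBD⟩
  exact ⟨isPC_iff_isPC_of_continues hsub hcont, hcont, hjoint.jcp_of_subset hsub,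
    hjoint.jcp_of_subset' hsub⟩
end PositiveLogic
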